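/- Let p be a prime and d ≥ 2 an integer with p > d, p = dω + a, 2 ≤ a < d, and suppose p < a(d-1). Let δ^(2) be the second base-p digit of 1/d. Then there exist non-negative integers l_1, ..., l_{d-1} with l_1 + ... + l_{d-1} = p - 1, l_i ≤ δ^(2) for all i, and l_{d-1} < δ^(2). -/

import Mathlib

/-!
The first two base-`p` digits of `1/d` form the integer `⌊p²/d⌋` (`d ∤ p²`, so the
expansion of `1/d` cannot switch to trailing `p - 1`s before them), hence
`δ^(2) = ⌊p²/d⌋ mod p`. Expanding `p² = (dω + a)²` gives `δ^(2) = aω + ⌊a²/d⌋`, and then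
`p ≤ (d - 1) δ^(2)`, which leaves room to write `p - 1` greedily as
`δ^(2) + ⋯ + δ^(2) + r + 0 + ⋯ + 0` with `d - 1` summands and `r < δ^(2)`.
-/

open Finset

section Digits

variable {b : ℕ} {A : ℕ → ℕ}

def digitPrefix (b : ℕ) (A : ℕ → ℕ) : ℕ → ℕ
  | 0 => 0
  | n + 1 => digitPrefix b A n * b + A (n + 1)

lemma digitPrefix_succ_mod (hA : ∀ e, A e < b) (n : ℕ) :
    digitPrefix b A (n + 1) % b = A (n + 1) := by
  rw [digitPrefix, Nat.mul_add_mod_self_right, Nat.mod_eq_of_lt (hA _)]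

lemma cast_digitPrefix (hb : b ≠ 0) (n : ℕ) :
    (digitPrefix b A n : ℝ) =
      (b : ℝ) ^ n * ∑ e ∈ range n, (A (e + 1) : ℝ) / (b : ℝ) ^ (e + 1) := by
  induction n with
  | zero => simp [digitPrefix]
  | succ n ih =>
    rw [digitPrefix, sum_range_succ, Nat.cast_add, Nat.cast_mul, ih]
    field_simp
    ring

lemma sum_range_le_and_le_add_one_div_pow (hb : 1 < b) (hA : ∀ e, A e < b) {x : ℝ}
    (hx : HasSum (fun e => (A (e + 1) : ℝ) / (b : ℝ) ^ (e + 1)) x) (n : ℕ) :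
    ∑ e ∈ range n, (A (e + 1) : ℝ) / (b : ℝ) ^ (e + 1) ≤ x ∧
      x ≤ ∑ e ∈ range n, (A (e + 1) : ℝ) / (b : ℝ) ^ (e + 1) + 1 / (b : ℝ) ^ n := by
  have hbR : (1 : ℝ) < b := by exact_mod_cast hb
  have htail := (hasSum_nat_add_iff' n).mpr hx
  have hgeo : HasSum (fun e => ((b : ℝ) - 1) / (b : ℝ) ^ (n + 1) * (1 / (b : ℝ)) ^ e)
      (1 / (b : ℝ) ^ n) := by
    have hsum :
        ((b : ℝ) - 1) / (b : ℝ) ^ (n + 1) * (1 - 1 / (b : ℝ))⁻¹ = 1 / (b : ℝ) ^ n := by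
      have : (b : ℝ) - 1 ≠ 0 := by linarith
      field_simp
      ring
    rw [← hsum]
    exact (hasSum_geometric_of_lt_one (by positivity)
      ((div_lt_one (by positivity)).mpr hbR)).mul_left _
  have hdigit (e : ℕ) : (A e : ℝ) ≤ b - 1 := by
    have : A e + 1 ≤ b := hA e
    rw [le_sub_iff_add_le]
    exact_mod_cast this
  constructor
  · linarith [hasSum_le (fun e => by positivity) hasSum_zero htail]
  · refine le_add_of_sub_left_le (hasSum_le (fun e => ?_) htail hgeo)
    calc (A (e + n + 1) : ℝ) / (b : ℝ) ^ (e + n + 1)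
        ≤ ((b : ℝ) - 1) / (b : ℝ) ^ (e + n + 1) := by gcongr; exact hdigit _
      _ = ((b : ℝ) - 1) / (b : ℝ) ^ (n + 1) * (1 / (b : ℝ)) ^ e := by
        rw [one_div_pow, div_mul_div_comm, mul_one, ← pow_add]
        ring_nf

lemma digitPrefix_eq_div (hb : 1 < b) (hA : ∀ e, A e < b) {d : ℕ} (hd : 0 < d)
    (hx : HasSum (fun e => (A (e + 1) : ℝ) / (b : ℝ) ^ (e + 1)) (1 / d)) {n : ℕ}
    (hnd : ¬ d ∣ b ^ n) : digitPrefix b A n = b ^ n / d := by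
  obtain ⟨hlo, hhi⟩ := sum_range_le_and_le_add_one_div_pow hb hA hx n
  have hbn : (0 : ℝ) < (b : ℝ) ^ n := by positivity
  have hdR : (0 : ℝ) < d := by exact_mod_cast hd
  have hprefix := cast_digitPrefix (A := A) (by omega : b ≠ 0) n
  have hle : d * digitPrefix b A n ≤ b ^ n := by
    have : (d : ℝ) * digitPrefix b A n ≤ (b : ℝ) ^ n := by
      rw [hprefix]
      calc (d : ℝ) * ((b : ℝ) ^ n * _) ≤ d * ((b : ℝ) ^ n * (1 / d)) := by gcongr
        _ = (b : ℝ) ^ n := by field_simp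
    exact_mod_cast this
  have hge : b ^ n ≤ d * digitPrefix b A n + d := by
    have : (b : ℝ) ^ n ≤ d * digitPrefix b A n + d := by
      rw [hprefix]
      have := mul_le_mul_of_nonneg_left hhi (by positivity : (0 : ℝ) ≤ d * (b : ℝ) ^ n)
      field_simp at this ⊢
      linarith
    exact_mod_cast this
  refine (Nat.div_eq_of_lt_le ?_ ?_).symm
  · rw [mul_comm]; exact hle
  · rw [add_mul, one_mul, mul_comm]
    refine lt_of_le_of_ne hge fun h => hnd ⟨digitPrefix b A n + 1, by rw [h]; ring⟩

theorem digit_eq_pow_div_mod (hb : 1 < b) (hA : ∀ e, A e < b) {d : ℕ} (hd : 0 < d)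
    (hx : HasSum (fun e => (A (e + 1) : ℝ) / (b : ℝ) ^ (e + 1)) (1 / d)) {n : ℕ}
    (hnd : ¬ d ∣ b ^ (n + 1)) : A (n + 1) = b ^ (n + 1) / d % b := by
  rw [← digitPrefix_eq_div hb hA hd hx hnd, digitPrefix_succ_mod hA]

end Digits

def greedyFill (M T i : ℕ) : ℕ := min M (T - (i - 1) * M)

lemma sum_Icc_greedyFill (M T n : ℕ) : ∑ i ∈ Icc 1 n, greedyFill M T i = min T (n * M) := by
  induction n with
  | zero => simp
  | succ n ih =>
    rw [sum_Icc_succ_top (by omega), ih, greedyFill, Nat.add_sub_cancel, add_one_mul]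
    omega

lemma exists_sum_Icc_eq_of_lt_mul {T n M : ℕ} (hT : T < n * M) :
    ∃ l : ℕ → ℕ, ∑ i ∈ Icc 1 n, l i = T ∧ (∀ i ∈ Icc 1 n, l i ≤ M) ∧ l n < M := by
  obtain ⟨hn, hM⟩ := CanonicallyOrderedAdd.mul_pos.mp (Nat.zero_lt_of_lt hT)
  obtain ⟨k, rfl⟩ : ∃ k, n = k + 1 := Nat.exists_eq_add_one.mpr hn
  refine ⟨greedyFill M T, ?_, fun i _ => min_le_left _ _, ?_⟩
  · rw [sum_Icc_greedyFill, min_eq_left hT.le]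
  · rw [greedyFill, Nat.add_sub_cancel]
    rw [add_one_mul] at hT
    exact min_lt_iff.mpr (Or.inr (by omega))

lemma sq_div_mod_eq {d ω a : ℕ} (ha : 0 < a) (had : a < d) :
    (d * ω + a) ^ 2 / d % (d * ω + a) = a * ω + a ^ 2 / d := by
  have hd : 0 < d := by omega
  have hsq : (d * ω + a) ^ 2 = a ^ 2 + d * ((d * ω + a) * ω + a * ω) := by ring
  have hlt : a * ω + a ^ 2 / d < d * ω + a := by
    have hq : a ^ 2 / d < a := (Nat.div_lt_iff_lt_mul hd).mpr (by nlinarith)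
    have hω : a * ω ≤ d * ω := Nat.mul_le_mul_right ω had.le
    omega
  rw [hsq, Nat.add_mul_div_left _ _ hd, add_comm, add_assoc, Nat.mul_add_mod,
    Nat.mod_eq_of_lt (by omega), add_comm]

lemma mul_add_le_pred_mul_mul_add_sq_div {d ω a : ℕ} (ha : 2 ≤ a) (had : a < d)
    (hω : 1 ≤ ω) :
    d * ω + a ≤ (d - 1) * (a * ω + a ^ 2 / d) := by
  obtain ⟨c, rfl⟩ : ∃ c, d = c + 1 := Nat.exists_eq_add_one.mpr (by omega)
  rw [Nat.add_sub_cancel]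
  rcases Nat.eq_zero_or_pos (a ^ 2 / (c + 1)) with hq | hq
  · have : a ^ 2 < c + 1 := by rwa [Nat.div_eq_zero_iff_lt (by omega)] at hq
    rw [hq]
    zify at *
    nlinarith [
      mul_nonneg (by linarith : (0:ℤ) ≤ ω - 1) (by nlinarith : (0:ℤ) ≤ c * (a - 1) - 1),
      mul_nonneg (by linarith : (0:ℤ) ≤ c - a ^ 2) (by linarith : (0:ℤ) ≤ a - 1),
      mul_nonneg (by linarith : (0:ℤ) ≤ a - 2) (by positivity : (0:ℤ) ≤ a ^ 2 + a + 1)]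
  · generalize a ^ 2 / (c + 1) = q at *
    zify at *
    nlinarith [
      mul_nonneg (by linarith : (0:ℤ) ≤ ω - 1) (by nlinarith : (0:ℤ) ≤ c * (a - 1) - 1),
      mul_nonneg (by linarith : (0:ℤ) ≤ c) (by linarith : (0:ℤ) ≤ a - 2),
      mul_nonneg (by linarith : (0:ℤ) ≤ c) (by linarith : (0:ℤ) ≤ q - 1)]

theorem stmt18_general (p d ω a : ℕ) (hp : p.Prime) (hdp : d < p)
    (hω : 1 ≤ ω) (ha2 : 2 ≤ a) (had : a < d) (heq : p = d * ω + a)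
    (A : ℕ → ℕ) (hA : ∀ e, A e ≤ p - 1)
    (hAsum : HasSum (fun e : ℕ => (A (e + 1) : ℝ) / (p : ℝ) ^ (e + 1)) (1 / (d : ℝ))) :
    ∃ l : ℕ → ℕ, (∑ i ∈ Finset.Icc 1 (d - 1), l i) = p - 1 ∧
      (∀ i ∈ Finset.Icc 1 (d - 1), l i ≤ A 2) ∧ l (d - 1) < A 2 := by
  have hdigit : ∀ e, A e < p := fun e => by have := hA e; have := hp.pos; omega
  have hcop : Nat.Coprime d (p ^ 2) :=
    ((Nat.coprime_of_lt_prime (by omega) hdp hp).symm).pow_right 2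
  have hnd : ¬ d ∣ p ^ 2 := fun h => by have := hcop.eq_one_of_dvd h; omega
  have hA2 : A 2 = a * ω + a ^ 2 / d := by
    rw [digit_eq_pow_div_mod hp.one_lt hdigit (by omega) hAsum hnd, heq,
      sq_div_mod_eq (by omega) had]
  apply exists_sum_Icc_eq_of_lt_mul
  have := mul_add_le_pred_mul_mul_add_sq_div ha2 had hω
  rw [hA2]
  omega

/-- Let `p` be prime, `p > d ≥ 2`, `p = dω + a`, `2 ≤ a < d`, `p < a(d-1)`, and let
`A 2` be the second base-`p` digit of `1/d`. Then there exist non-negative integers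
`l_1, …, l_{d-1}` with `∑ l_i = p - 1`, `l_i ≤ A 2` for all `i`, and `l_{d-1} < A 2`. -/
theorem stmt18 (p d ω a : ℕ) (hp : p.Prime) (hd : 2 ≤ d) (hdp : d < p)
    (hω : 1 ≤ ω) (ha2 : 2 ≤ a) (had : a < d) (heq : p = d * ω + a)
    (hlt : p < a * (d - 1))
    (A : ℕ → ℕ) (hA : ∀ e, A e ≤ p - 1)
    (hAsum : HasSum (fun e : ℕ => (A (e + 1) : ℝ) / (p : ℝ) ^ (e + 1)) (1 / (d : ℝ)))
    (hAnt : ∀ N, ∃ e ≥ N, A e ≠ 0) :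
    ∃ l : ℕ → ℕ, (∑ i ∈ Finset.Icc 1 (d - 1), l i) = p - 1 ∧
      (∀ i ∈ Finset.Icc 1 (d - 1), l i ≤ A 2) ∧ l (d - 1) < A 2 :=
  stmt18_general p d ω a hp hdp hω ha2 had heq A hA hAsum
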